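/- Let 𝕂 be ℝ or ℂ, V a 𝕂-vector space, and U : V³ → 𝕂 a trilinear map satisfying ηU = U, where η ∈ 𝕂[S₃] acts on U as a symmetry operator. Then for all x,y,z ∈ V the following four identities hold: U(z,y,x) = U(x,y,z); U(x,y,z) + U(x,z,y) + U(z,x,y) = 0; U(y,z,x) = U(x,z,y); and U(x,y,z) + U(x,z,y) + U(y,x,z) = 0. -/

import Mathlib

/-- The action of a group-algebra element `a ∈ 𝕂[S_r]` on an `r`-linear map:
`(aT)(v₁,…,v_r) = Σ_p a(p)·T(v_{p(1)},…,v_{p(r)})`. -/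
noncomputable def gaAct {𝕂 : Type*} [RCLike 𝕂] {V : Type*} [AddCommGroup V] [Module 𝕂 V]
    {r : ℕ} (a : MonoidAlgebra 𝕂 (Equiv.Perm (Fin r)))
    (T : MultilinearMap 𝕂 (fun _ : Fin r => V) 𝕂) :
    MultilinearMap 𝕂 (fun _ : Fin r => V) 𝕂 :=
  ∑ p : Equiv.Perm (Fin r), a.coeff p • T.domDomCongr p

/-- The idempotent `η = (1/3)(id − (1 2) − c + (1 3))` of `𝕂[S₃]`, where `c` is the
3-cycle `1↦2↦3↦1` (0-based: `finRotate 3`; `(1 2)` is `swap 0 1`, `(1 3)` is `swap 0 2`). -/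
noncomputable def etaK (𝕂 : Type*) [RCLike 𝕂] : MonoidAlgebra 𝕂 (Equiv.Perm (Fin 3)) :=
  (3⁻¹ : 𝕂) • (MonoidAlgebra.single 1 1
    - MonoidAlgebra.single (Equiv.swap (0 : Fin 3) 1) 1
    - MonoidAlgebra.single (finRotate 3) 1
    + MonoidAlgebra.single (Equiv.swap (0 : Fin 3) 2) 1)

/-! Evaluating `ηU = U` at `(x, y, z)` gives `2 U(x,y,z) + U(y,x,z) + U(y,z,x) = U(z,y,x)`.
Subtracting this relation at `(z, y, x)` leaves `3 (U(z,y,x) - U(x,y,z)) = 0`, so `U` is symmetric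
in its outer arguments; feeding that symmetry back into the relation gives
`U(x,y,z) + U(x,z,y) + U(y,x,z) = 0`. The four identities are relabellings of these two. -/

section gaAct

variable {𝕂 : Type*} [RCLike 𝕂] {V : Type*} [AddCommGroup V] [Module 𝕂 V] {r : ℕ}
  (T : MultilinearMap 𝕂 (fun _ : Fin r => V) 𝕂)

theorem gaAct_add (a b : MonoidAlgebra 𝕂 (Equiv.Perm (Fin r))) :
    gaAct (a + b) T = gaAct a T + gaAct b T := by
  simp only [gaAct, MonoidAlgebra.coeff_add, Finsupp.add_apply, add_smul, Finset.sum_add_distrib]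

theorem gaAct_sub (a b : MonoidAlgebra 𝕂 (Equiv.Perm (Fin r))) :
    gaAct (a - b) T = gaAct a T - gaAct b T := by
  simp only [gaAct, MonoidAlgebra.coeff_sub, Finsupp.sub_apply, ← Finset.sum_sub_distrib]
  refine Finset.sum_congr rfl fun p _ => ?_
  exact sub_smul (a.coeff p) (b.coeff p) (T.domDomCongr p)

theorem gaAct_smul (c : 𝕂) (a : MonoidAlgebra 𝕂 (Equiv.Perm (Fin r))) :
    gaAct (c • a) T = c • gaAct a T := by
  simp only [gaAct, MonoidAlgebra.coeff_smul, Finsupp.smul_apply, smul_eq_mul, mul_smul,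
    Finset.smul_sum]

theorem gaAct_single (p : Equiv.Perm (Fin r)) (c : 𝕂) :
    gaAct (MonoidAlgebra.single p c) T = c • T.domDomCongr p := by
  simp [gaAct, MonoidAlgebra.coeff_single, Finsupp.single_apply]

end gaAct

section etaK

variable {𝕂 : Type*} [RCLike 𝕂] {V : Type*} [AddCommGroup V] [Module 𝕂 V]
  (U : MultilinearMap 𝕂 (fun _ : Fin 3 => V) 𝕂)

theorem gaAct_etaK_apply (x y z : V) :
    gaAct (etaK 𝕂) U ![x, y, z] =
      3⁻¹ * (U ![x, y, z] - U ![y, x, z] - U ![y, z, x] + U ![z, y, x]) := by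
  have h01 : (fun i => ![x, y, z] (Equiv.swap 0 1 i)) = ![y, x, z] := by
    funext i; fin_cases i <;> rfl
  have hc : (fun i => ![x, y, z] (finRotate 3 i)) = ![y, z, x] := by
    funext i; fin_cases i <;> rfl
  have h02 : (fun i => ![x, y, z] (Equiv.swap 0 2 i)) = ![z, y, x] := by
    funext i; fin_cases i <;> rfl
  simp only [etaK, gaAct_smul, gaAct_add, gaAct_sub, gaAct_single, one_smul,
    smul_apply, add_apply, sub_apply, MultilinearMap.domDomCongr_apply, smul_eq_mul,
    Equiv.Perm.coe_one, id_eq, h01, hc, h02]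

variable {U}

theorem two_mul_add_add_eq_of_gaAct_etaK (hU : gaAct (etaK 𝕂) U = U) (x y z : V) :
    2 * U ![x, y, z] + U ![y, x, z] + U ![y, z, x] = U ![z, y, x] := by
  have h := gaAct_etaK_apply U x y z
  rw [hU] at h
  linear_combination (3 : 𝕂) * h

theorem map_swap_outer_of_gaAct_etaK (hU : gaAct (etaK 𝕂) U = U) (x y z : V) :
    U ![z, y, x] = U ![x, y, z] := by
  linear_combination
    (two_mul_add_add_eq_of_gaAct_etaK hU z y x - two_mul_add_add_eq_of_gaAct_etaK hU x y z) / 3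

theorem add_add_eq_zero_of_gaAct_etaK (hU : gaAct (etaK 𝕂) U = U) (x y z : V) :
    U ![x, y, z] + U ![x, z, y] + U ![y, x, z] = 0 := by
  linear_combination two_mul_add_add_eq_of_gaAct_etaK hU x y z
    - map_swap_outer_of_gaAct_etaK hU x z y + map_swap_outer_of_gaAct_etaK hU x y z

end etaK

/-- A trilinear map `U` with `ηU = U` satisfies the four linear identities (4.11). -/
theorem stmt17 {𝕂 : Type*} [RCLike 𝕂] {V : Type*} [AddCommGroup V] [Module 𝕂 V]
    (U : MultilinearMap 𝕂 (fun _ : Fin 3 => V) 𝕂)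
    (hU : gaAct (etaK 𝕂) U = U) :
    ∀ x y z : V,
      U ![z, y, x] = U ![x, y, z] ∧
      U ![x, y, z] + U ![x, z, y] + U ![z, x, y] = 0 ∧
      U ![y, z, x] = U ![x, z, y] ∧
      U ![x, y, z] + U ![x, z, y] + U ![y, x, z] = 0 := fun x y z =>
  ⟨map_swap_outer_of_gaAct_etaK hU x y z,
    by simpa only [add_comm (U ![x, y, z])] using add_add_eq_zero_of_gaAct_etaK hU x z y,
    map_swap_outer_of_gaAct_etaK hU x z y,
    add_add_eq_zero_of_gaAct_etaK hU x y z⟩
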